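/- arXiv:2402.02567 — 5 statements merged into one kernel-verified Lean document; each statement's English description precedes it below -/
import Mathlib

section
/- Let X be a subset of a normed space such that X consists of all finite sums of vectors from a family (x_k)_{k ≥ 0} with ∑_{k=0}^∞ ‖x_k‖ < ∞, where each element of X is a sum of finitely many distinct x_k. Then X is totally bounded. -/
open Finset

theorem totallyBounded_setOf_finset_sum {ι α : Type*} [AddCommGroup α] [UniformSpace α]
    [IsUniformAddGroup α] {f : ι → α} (hf : CauchySeq fun s : Finset ι => ∑ i ∈ s, f i) :
    TotallyBounded {y : α | ∃ F : Finset ι, y = ∑ i ∈ F, f i} := by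
  classical
  rw [totallyBounded_iff_subset_finite_iUnion_nhds_zero]
  intro U hU
  obtain ⟨s, hs⟩ := cauchySeq_finset_iff_sum_vanishing.mp hf U hU
  refine ⟨(s.powerset.image fun G => ∑ i ∈ G, f i : Finset α), finite_toSet _, ?_⟩
  rintro _ ⟨F, rfl⟩
  -- The part of `F` inside `s` gives the centre; the sum over the part outside `s` lies in `U`.
  refine Set.mem_iUnion₂.mpr ⟨∑ i ∈ F ∩ s, f i, ?_, ∑ i ∈ F \ s, f i, hs _ sdiff_disjoint,
    sum_inter_add_sum_sdiff F s f⟩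
  exact mem_coe.mpr (mem_image_of_mem _ (mem_powerset.mpr inter_subset_right))

theorem firstOrderComplexity.finite_subset_sums_totallyBounded_general
    {E : Type*} [NormedAddCommGroup E]
    (x : ℕ → E) (hx : Summable fun k => ‖x k‖) :
    TotallyBounded {y : E | ∃ F : Finset ℕ, y = ∑ k ∈ F, x k} :=
  totallyBounded_setOf_finset_sum (cauchySeq_finset_of_norm_bounded hx fun _ => le_rfl)

/-- If `(x_k)` is a family in a normed real vector space with `∑ ‖x_k‖ < ∞`, then the
set of all sums of finitely many distinct `x_k`'s is totally bounded. -/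
theorem firstOrderComplexity.finite_subset_sums_totallyBounded
    {E : Type*} [NormedAddCommGroup E] [NormedSpace ℝ E]
    (x : ℕ → E) (hx : Summable fun k => ‖x k‖) :
    TotallyBounded {y : E | ∃ F : Finset ℕ, y = ∑ k ∈ F, x k} :=
  firstOrderComplexity.finite_subset_sums_totallyBounded_general x hx
end

section
/- There exist sequences of integers m(r), k(r) (r ≥ 0) such that, defining g_k(λ) = (∑_{j=0}^k λ^j/j!)e^{-λ}, for all r ≥ 1 and all m ≥ m(r) we have g_{k(r−1)}(m) ≤ 1/3, and for all k ≥ k(r) we have g_k(m(r)) ≥ 2/3. Consequently, for any r > s ≥ 0, |g_{k(r)}(m(s+1)) − g_{k(s)}(m(s+1))| ≥ 1/3. -/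
open Filter Topology
open scoped BigOperators

/-- The Poisson cumulative distribution function `g_k(λ) = (∑_{j ≤ k} λ^j/j!)·e^{-λ}`. -/
noncomputable def poissonCDF (k : ℕ) (l : ℝ) : ℝ :=
  (∑ j ∈ Finset.range (k + 1), l ^ j / (Nat.factorial j)) * Real.exp (-l)

/-!
For fixed `k`, `g_k(λ) → 0` as `λ → ∞` (polynomial times `e^{-λ}`), and for fixed `λ`,
`g_k(λ) → 1` as `k → ∞` (partial sums of `e^λ`). So one may alternate: `m(r)` is the least
threshold beyond which `g_{k(r-1)} ≤ 1/3`, and `k(r)` the least threshold beyond which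
`g_K(m(r)) ≥ 2/3`. Since `g_{k(r-1)}(m(r)) ≤ 1/3 < 2/3`, necessarily `k(r-1) < k(r)`, so `k` is
increasing and `g_{k(r)}(m(s+1)) ≥ 2/3 > 1/3 ≥ g_{k(s)}(m(s+1))` whenever `s < r`.
-/

namespace firstOrderComplexity

theorem tendsto_poissonCDF_atTop (k : ℕ) : Tendsto (poissonCDF k) atTop (𝓝 0) := by
  have h : poissonCDF k = fun l : ℝ =>
      ∑ j ∈ Finset.range (k + 1), l ^ j * Real.exp (-l) / (Nat.factorial j) := by
    ext l
    simp only [poissonCDF, Finset.sum_mul, div_mul_eq_mul_div]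
  rw [h, ← show ∑ j ∈ Finset.range (k + 1), (0 : ℝ) / (Nat.factorial j) = 0 by simp]
  exact tendsto_finsetSum _ fun j _ =>
    (Real.tendsto_pow_mul_exp_neg_atTop_nhds_zero j).div_const _

theorem tendsto_poissonCDF_one (l : ℝ) :
    Tendsto (fun k : ℕ => poissonCDF k l) atTop (𝓝 1) := by
  have hexp : HasSum (fun j : ℕ => l ^ j / (Nat.factorial j)) (Real.exp l) := by
    rw [Real.exp_eq_exp_ℝ, NormedSpace.exp_eq_tsum_div]
    exact (NormedSpace.expSeries_div_summable l).hasSum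
  have hsum := (hexp.tendsto_sum_nat.comp (tendsto_add_atTop_nat 1)).mul_const (Real.exp (-l))
  simpa [poissonCDF, ← Real.exp_add] using hsum

theorem eventually_poissonCDF_natCast_le (k : ℕ) {c : ℝ} (hc : 0 < c) :
    ∀ᶠ M : ℕ in atTop, poissonCDF k M ≤ c :=
  ((tendsto_poissonCDF_atTop k).comp tendsto_natCast_atTop_atTop).eventually
    (eventually_le_nhds hc)

theorem eventually_le_poissonCDF (l : ℝ) {c : ℝ} (hc : c < 1) :
    ∀ᶠ K : ℕ in atTop, c ≤ poissonCDF K l :=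
  (tendsto_poissonCDF_one l).eventually (eventually_ge_nhds hc)

open Classical in
noncomputable def lowThreshold (k : ℕ) : ℕ :=
  Nat.find (eventually_atTop.mp (eventually_poissonCDF_natCast_le k (c := 1 / 3) (by norm_num)))

open Classical in
noncomputable def highThreshold (m : ℕ) : ℕ :=
  Nat.find (eventually_atTop.mp (eventually_le_poissonCDF m (c := 2 / 3) (by norm_num)))

theorem poissonCDF_le_of_lowThreshold_le {k M : ℕ} (hM : lowThreshold k ≤ M) :
    poissonCDF k M ≤ 1 / 3 := by
  classical
  exact Nat.find_spec (eventually_atTop.mp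
    (eventually_poissonCDF_natCast_le k (c := 1 / 3) (by norm_num))) M hM

theorem le_poissonCDF_of_highThreshold_le {m K : ℕ} (hK : highThreshold m ≤ K) :
    2 / 3 ≤ poissonCDF K m := by
  classical
  exact Nat.find_spec (eventually_atTop.mp
    (eventually_le_poissonCDF m (c := 2 / 3) (by norm_num))) K hK

theorem lt_highThreshold_lowThreshold (k : ℕ) : k < highThreshold (lowThreshold k) := by
  by_contra! hk
  have hlow := poissonCDF_le_of_lowThreshold_le (le_refl (lowThreshold k))
  have hhigh := le_poissonCDF_of_highThreshold_le hk
  linarith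

/-- The pairs `(m(r), k(r))`. -/
noncomputable def separatingIndices : ℕ → ℕ × ℕ
  | 0 => (0, 0)
  | r + 1 =>
    (lowThreshold (separatingIndices r).2, highThreshold (lowThreshold (separatingIndices r).2))

theorem strictMono_separatingIndices_snd : StrictMono fun r => (separatingIndices r).2 :=
  strictMono_nat_of_lt_succ fun r => lt_highThreshold_lowThreshold (separatingIndices r).2

end firstOrderComplexity

/-- There exist sequences `m(r)`, `k(r)` with `m(0) = k(0) = 0` such that for all
`r ≥ 1` and all integers `M ≥ m(r)` one has `g_{k(r-1)}(M) ≤ 1/3`, and for all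
`K ≥ k(r)` one has `g_K(m(r)) ≥ 2/3`.  Consequently, for all `r > s ≥ 0`,
`|g_{k(r)}(m(s+1)) − g_{k(s)}(m(s+1))| ≥ 1/3`. -/
theorem firstOrderComplexity.separated_poisson_sums :
    ∃ m k : ℕ → ℕ, m 0 = 0 ∧ k 0 = 0 ∧
      (∀ r : ℕ, 1 ≤ r → ∀ M : ℕ, m r ≤ M → poissonCDF (k (r - 1)) (M : ℝ) ≤ 1 / 3) ∧
      (∀ r : ℕ, 1 ≤ r → ∀ K : ℕ, k r ≤ K → (2 : ℝ) / 3 ≤ poissonCDF K (m r : ℝ)) ∧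
      (∀ r s : ℕ, s < r →
        (1 : ℝ) / 3 ≤ |poissonCDF (k r) ((m (s + 1) : ℕ) : ℝ)
                        - poissonCDF (k s) ((m (s + 1) : ℕ) : ℝ)|) := by
  refine ⟨fun r => (separatingIndices r).1, fun r => (separatingIndices r).2, rfl, rfl,
    ?_, ?_, ?_⟩
  · rintro (_ | s) hr M hM
    · omega
    · exact poissonCDF_le_of_lowThreshold_le hM
  · rintro (_ | s) hr K hK
    · omega
    · exact le_poissonCDF_of_highThreshold_le hK
  · intro r s hsr
    have hhigh : 2 / 3 ≤ poissonCDF (separatingIndices r).2 (separatingIndices (s + 1)).1 :=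
      le_poissonCDF_of_highThreshold_le (strictMono_separatingIndices_snd.monotone hsr)
    have hlow : poissonCDF (separatingIndices s).2 (separatingIndices (s + 1)).1 ≤ 1 / 3 :=
      poissonCDF_le_of_lowThreshold_le le_rfl
    rw [abs_of_nonneg (by linarith)]
    linarith
end

section
/- Let p, q ∈ [0,1], p_min = min{p, q, 1−p, 1−q}, and (s_n) a sequence of nonnegative integers with √(s_n/p_min)·|p−q| → 0. Then the total variation distance between the distribution of s_n i.i.d. Bernoulli(p) random variables and s_n i.i.d. Bernoulli(q) random variables tends to 0 as n → ∞. In fact there is an absolute constant C such that this distance is at most C·√(s_n/p_min)·|p−q|. -/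
/-!
The total variation distance is at most the `ℓ¹` distance, and by Cauchy–Schwarz, splitting
`|P - Q| = |√P - √Q| (√P + √Q)`, the squared `ℓ¹` distance of two probability vectors is at
most `8 (1 - ∑ √(P Q))`. For product measures the Bhattacharyya coefficient `∑ √(P Q)`
factorises as `ρ ^ s` with `ρ = √(pq) + √((1-p)(1-q))`, and Bernoulli's inequality gives
`1 - ρ ^ s ≤ s (1 - ρ)`. Finally `2 (1 - ρ) = (√p - √q)² + (√(1-p) - √(1-q))²`, and each
square is at most `(p - q)² / (4 p_min)` because `√x + √y ≥ 2 √p_min`.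
Hence the distance is at most `√2 · √(s / p_min) · |p - q|`.
-/

open Filter Topology
open scoped BigOperators

/-- The probability of the outcome `a` for `s` independent Bernoulli(`p`) variables. -/
noncomputable def bernProb (p : ℝ) (s : ℕ) (a : Fin s → Bool) : ℝ :=
  ∏ i : Fin s, (if a i then p else 1 - p)

/-- The total variation distance between the laws of `s` i.i.d. Bernoulli(`p`) and
`s` i.i.d. Bernoulli(`q`) random variables: the supremum over events
`A ⊆ {0,1}^s` of the difference of their probabilities. -/
noncomputable def bernTV (p q : ℝ) (s : ℕ) : ℝ :=
  ⨆ A : Finset (Fin s → Bool),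
    |∑ a ∈ A, bernProb p s a - ∑ a ∈ A, bernProb q s a|

section Hellinger

variable {α : Type*} [Fintype α]

theorem abs_sum_sub_sum_le_sum_abs_sub (A : Finset α) (P Q : α → ℝ) :
    |∑ a ∈ A, P a - ∑ a ∈ A, Q a| ≤ ∑ a, |P a - Q a| :=
  calc |∑ a ∈ A, P a - ∑ a ∈ A, Q a|
      = |∑ a ∈ A, (P a - Q a)| := by rw [Finset.sum_sub_distrib]
    _ ≤ ∑ a ∈ A, |P a - Q a| := Finset.abs_sum_le_sum_abs _ _
    _ ≤ ∑ a, |P a - Q a| :=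
        Finset.sum_le_sum_of_subset_of_nonneg (Finset.subset_univ A) fun _ _ _ => abs_nonneg _

theorem sum_abs_sub_sq_le_of_sum_eq_one {P Q : α → ℝ} (hP : ∀ a, 0 ≤ P a) (hQ : ∀ a, 0 ≤ Q a)
    (hP1 : ∑ a, P a = 1) (hQ1 : ∑ a, Q a = 1) :
    (∑ a, |P a - Q a|) ^ 2 ≤ 8 * (1 - ∑ a, √(P a * Q a)) := by
  set B := ∑ a, √(P a * Q a)
  -- `ε = -1` and `ε = 1` give the two Cauchy–Schwarz factors `∑ (√P ∓ √Q)²`.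
  have sq_sqrt_add_sqrt (ε : ℝ) (a : α) :
      (√(P a) + ε * √(Q a)) ^ 2 = P a + ε ^ 2 * Q a + 2 * ε * √(P a * Q a) := by
    rw [Real.sqrt_mul (hP a)]
    linear_combination Real.sq_sqrt (hP a) + ε ^ 2 * Real.sq_sqrt (hQ a)
  have sum_sq_sqrt_add_sqrt (ε : ℝ) :
      ∑ a, (√(P a) + ε * √(Q a)) ^ 2 = 1 + ε ^ 2 + 2 * ε * B := by
    simp only [sq_sqrt_add_sqrt, Finset.sum_add_distrib, ← Finset.mul_sum, hP1, hQ1, mul_one, B]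
  have hdiff := sum_sq_sqrt_add_sqrt (-1)
  have hsum := sum_sq_sqrt_add_sqrt 1
  have hB : 0 ≤ B := Finset.sum_nonneg fun a _ => Real.sqrt_nonneg _
  have hB1 : B ≤ 1 := by
    have := Finset.sum_nonneg fun a (_ : a ∈ Finset.univ) => sq_nonneg (√(P a) + -1 * √(Q a))
    rw [hdiff] at this
    linarith
  have habs (a : α) : |P a - Q a| = |√(P a) + -1 * √(Q a)| * (√(P a) + 1 * √(Q a)) := by
    rw [← abs_of_nonneg (by positivity : 0 ≤ √(P a) + 1 * √(Q a)), ← abs_mul]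
    congr 1
    linear_combination Real.sq_sqrt (hQ a) - Real.sq_sqrt (hP a)
  calc (∑ a, |P a - Q a|) ^ 2
      ≤ (∑ a, (√(P a) + -1 * √(Q a)) ^ 2) * ∑ a, (√(P a) + 1 * √(Q a)) ^ 2 := by
        simpa only [habs, sq_abs] using Finset.sum_mul_sq_le_sq_mul_sq Finset.univ
          (fun a => |√(P a) + -1 * √(Q a)|) (fun a => √(P a) + 1 * √(Q a))
    _ ≤ 8 * (1 - B) := by rw [hdiff, hsum]; nlinarith

end Hellinger

theorem sq_sqrt_sub_sqrt_le {m x y : ℝ} (hm : 0 < m) (hx : m ≤ x) (hy : m ≤ y) :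
    (√x - √y) ^ 2 ≤ (x - y) ^ 2 / (4 * m) := by
  have hxy : 4 * m ≤ (√x + √y) ^ 2 := by
    nlinarith [Real.sq_sqrt hm.le, Real.sqrt_le_sqrt hx, Real.sqrt_le_sqrt hy, Real.sqrt_nonneg m]
  have hfactor : (x - y) ^ 2 = (√x - √y) ^ 2 * (√x + √y) ^ 2 := by
    linear_combination (Real.sq_sqrt (hm.le.trans hy) - Real.sq_sqrt (hm.le.trans hx)) *
      (x - y + √x ^ 2 - √y ^ 2)
  rw [le_div_iff₀ (by positivity), hfactor]
  exact mul_le_mul_of_nonneg_left hxy (sq_nonneg _)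

theorem one_sub_pow_le_mul_one_sub {ρ : ℝ} (hρ : -1 ≤ ρ) (s : ℕ) : 1 - ρ ^ s ≤ s * (1 - ρ) := by
  have := one_add_mul_le_pow (a := ρ - 1) (by linarith) s
  rw [add_sub_cancel] at this
  linarith

section Bernoulli

variable {p q : ℝ}

theorem bernProb_nonneg (hp₀ : 0 ≤ p) (hp₁ : p ≤ 1) (s : ℕ) (a : Fin s → Bool) :
    0 ≤ bernProb p s a :=
  Finset.prod_nonneg fun i _ => by split <;> linarith

theorem sum_bernProb (p : ℝ) (s : ℕ) : ∑ a, bernProb p s a = 1 :=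
  (Fintype.sum_pow (fun b : Bool => if b then p else 1 - p) s).symm.trans (by simp)

theorem sum_sqrt_bernProb_mul (hp₀ : 0 ≤ p) (hp₁ : p ≤ 1) (hq₀ : 0 ≤ q) (hq₁ : q ≤ 1) (s : ℕ) :
    ∑ a, √(bernProb p s a * bernProb q s a) = (√(p * q) + √((1 - p) * (1 - q))) ^ s := by
  have hfactor (a : Fin s → Bool) : √(bernProb p s a * bernProb q s a) =
      ∏ i, √((if a i then p else 1 - p) * (if a i then q else 1 - q)) := by
    rw [bernProb, bernProb, ← Finset.prod_mul_distrib,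
      Real.sqrt_prod _ fun i _ => by split <;> nlinarith]
  rw [Finset.sum_congr rfl fun a _ => hfactor a,
    ← Fintype.sum_pow (fun b : Bool => √((if b then p else 1 - p) * (if b then q else 1 - q)))]
  simp

theorem one_sub_sqrt_mul_add_sqrt_mul_le {m : ℝ} (hm : 0 < m) (hmp : m ≤ p) (hmq : m ≤ q)
    (hmp' : m ≤ 1 - p) (hmq' : m ≤ 1 - q) :
    1 - (√(p * q) + √((1 - p) * (1 - q))) ≤ (p - q) ^ 2 / (4 * m) := by
  have hhellinger : 2 * (1 - (√(p * q) + √((1 - p) * (1 - q)))) =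
      (√p - √q) ^ 2 + (√(1 - p) - √(1 - q)) ^ 2 := by
    rw [Real.sqrt_mul (by linarith), Real.sqrt_mul (by linarith)]
    linear_combination -(Real.sq_sqrt (by linarith : 0 ≤ p)) - Real.sq_sqrt (by linarith : 0 ≤ q)
      - Real.sq_sqrt (by linarith : 0 ≤ 1 - p) - Real.sq_sqrt (by linarith : 0 ≤ 1 - q)
  have h₁ := sq_sqrt_sub_sqrt_le hm hmp hmq
  have h₂ := sq_sqrt_sub_sqrt_le hm hmp' hmq'
  rw [sub_sub_sub_cancel_left, ← neg_sub p q, neg_sq] at h₂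
  linarith

theorem bernTV_le_sum_abs_sub (p q : ℝ) (s : ℕ) :
    bernTV p q s ≤ ∑ a, |bernProb p s a - bernProb q s a| :=
  ciSup_le fun A => abs_sum_sub_sum_le_sum_abs_sub A _ _

theorem bernTV_nonneg (p q : ℝ) (s : ℕ) : 0 ≤ bernTV p q s := by
  refine le_trans ?_ (le_ciSup (Set.finite_range _).bddAbove (∅ : Finset (Fin s → Bool)))
  simp

theorem bernTV_le {m : ℝ} (hm : 0 < m) (hmp : m ≤ p) (hmq : m ≤ q)
    (hmp' : m ≤ 1 - p) (hmq' : m ≤ 1 - q) (s : ℕ) :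
    bernTV p q s ≤ √2 * √(s / m) * |p - q| := by
  have hp₀ : 0 ≤ p := by linarith
  have hq₀ : 0 ≤ q := by linarith
  have hp₁ : p ≤ 1 := by linarith
  have hq₁ : q ≤ 1 := by linarith
  set ρ := √(p * q) + √((1 - p) * (1 - q))
  have hρ : 0 ≤ ρ := by positivity
  have hL1 : (∑ a, |bernProb p s a - bernProb q s a|) ^ 2 ≤ (√2 * √(s / m) * |p - q|) ^ 2 :=
    calc (∑ a, |bernProb p s a - bernProb q s a|) ^ 2
        ≤ 8 * (1 - ρ ^ s) := by
          simpa only [sum_sqrt_bernProb_mul hp₀ hp₁ hq₀ hq₁] using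
            sum_abs_sub_sq_le_of_sum_eq_one (bernProb_nonneg hp₀ hp₁ s)
              (bernProb_nonneg hq₀ hq₁ s) (sum_bernProb p s) (sum_bernProb q s)
      _ ≤ 8 * (s * (1 - ρ)) := by gcongr; exact one_sub_pow_le_mul_one_sub (by linarith) s
      _ ≤ 8 * (s * ((p - q) ^ 2 / (4 * m))) := by
          gcongr; exact one_sub_sqrt_mul_add_sqrt_mul_le hm hmp hmq hmp' hmq'
      _ = (√2 * √(s / m) * |p - q|) ^ 2 := by
          rw [mul_pow, mul_pow, Real.sq_sqrt zero_le_two, Real.sq_sqrt (by positivity), sq_abs]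
          ring
  exact (bernTV_le_sum_abs_sub p q s).trans <| (sq_le_sq₀ (by positivity) (by positivity)).1 hL1

end Bernoulli

/-- Let `p, q ∈ [0,1]`, `p_min = min{p, q, 1-p, 1-q} > 0`, and `(s_n)` nonnegative
integers with `√(s_n/p_min)·|p-q| → 0`.  Then the total variation distance between
`s_n` i.i.d. Bernoulli(`p`) and `s_n` i.i.d. Bernoulli(`q`) variables tends to `0`;
in fact there is an absolute constant `C` bounding it by `C·√(s_n/p_min)·|p-q|`. -/
theorem firstOrderComplexity.bernoulli_tv_bound :
    ∃ C : ℝ, 0 < C ∧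
      ∀ p q : ℝ, p ∈ Set.Icc (0 : ℝ) 1 → q ∈ Set.Icc (0 : ℝ) 1 →
        0 < min (min p q) (min (1 - p) (1 - q)) →
        ∀ s : ℕ → ℕ,
          (∀ n, bernTV p q (s n)
            ≤ C * Real.sqrt ((s n : ℝ) / min (min p q) (min (1 - p) (1 - q))) * |p - q|) ∧
          (Tendsto
              (fun n => Real.sqrt ((s n : ℝ) / min (min p q) (min (1 - p) (1 - q))) * |p - q|)
              atTop (𝓝 0) →
            Tendsto (fun n => bernTV p q (s n)) atTop (𝓝 0)) := by
  refine ⟨√2, by positivity, fun p q _ _ hm s => ?_⟩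
  have hbound (n : ℕ) := bernTV_le hm (min_le_of_left_le (min_le_left _ _))
    (min_le_of_left_le (min_le_right _ _)) (min_le_of_right_le (min_le_left _ _))
    (min_le_of_right_le (min_le_right _ _)) (s n)
  refine ⟨hbound, fun hlim => ?_⟩
  have hlim' := hlim.const_mul √2
  rw [mul_zero] at hlim'
  exact squeeze_zero (fun n => bernTV_nonneg p q (s n))
    (fun n => (hbound n).trans_eq (mul_assoc _ _ _)) hlim'
end

section
/- For p > q in (0,1), the sum ∑_{k=0}^{s} C(s,k) |p^k(1−p)^{s−k} − q^k(1−q)^{s−k}| equals 2(p−q)·s·C(s−1, k₀)·t^{k₀}(1−t)^{s−1−k₀} for some t ∈ (q,p), where k₀ = ⌊ s·(ln(1−q) − ln(1−p)) / (ln p + ln(1−q) − ln q − ln(1−p)) ⌋; moreover ⌊qs⌋ ≤ k₀ < ps. -/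
/-!
The ratio `p ^ k (1 - p) ^ (s - k) / (q ^ k (1 - q) ^ (s - k))` is increasing in `k`, so the
difference of the two binomial weights changes sign exactly once, at `binomialCrossing s p q`;
the bounds `q s ≤ k₀ < p s` follow from `a - b < a (log a - log b)`. As both distributions have
mass one, the sum of absolute differences is twice `F_q(k₀) - F_p(k₀)`, where
`F_x(k₀) = ∑_{k ≤ k₀} C(s,k) x ^ k (1 - x) ^ (s - k)`. The derivative of `x ↦ F_x(k₀)`, a sum of
Bernstein polynomials, telescopes to `-s C(s-1,k₀) x ^ k₀ (1 - x) ^ (s-1-k₀)`, and the mean value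
theorem concludes.
-/

open Finset Polynomial Real

theorem Real.sub_lt_mul_log_sub_log {a b : ℝ} (ha : 0 < a) (hb : 0 < b) (hab : a ≠ b) :
    a - b < a * (log a - log b) := by
  have h := log_lt_sub_one_of_pos (div_pos hb ha) (div_ne_one_of_ne hab.symm)
  rw [log_div hb.ne' ha.ne', lt_sub_iff_add_lt, lt_div_iff₀ ha] at h
  nlinarith

theorem bernsteinPolynomial.eval_eq {R : Type*} [CommRing R] (n ν : ℕ) (x : R) :
    (bernsteinPolynomial R n ν).eval x = n.choose ν * (x ^ ν * (1 - x) ^ (n - ν)) := by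
  simp [bernsteinPolynomial, mul_assoc]

theorem bernsteinPolynomial.derivative_sum_range (R : Type*) [CommRing R] (n m : ℕ) :
    derivative (∑ ν ∈ range (m + 1), bernsteinPolynomial R n ν) =
      -(n * bernsteinPolynomial R (n - 1) m) := by
  induction m with
  | zero => simp [derivative_zero]
  | succ m ih => rw [sum_range_succ, derivative_add, ih, derivative_succ]; ring

theorem sum_range_choose_mul_pow_mul_one_sub_pow {R : Type*} [CommRing R] (n : ℕ) (x : R) :
    ∑ k ∈ range (n + 1), (n.choose k : R) * (x ^ k * (1 - x) ^ (n - k)) = 1 := by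
  simpa only [eval_finsetSum, bernsteinPolynomial.eval_eq, eval_one] using
    congrArg (eval x) (bernsteinPolynomial.sum R n)

theorem exists_mem_Ioo_sum_range_choose_mul_sub_eq (n m : ℕ) {q p : ℝ} (hqp : q < p) :
    ∃ t ∈ Set.Ioo q p, ∑ k ∈ range (m + 1),
        (n.choose k : ℝ) * (q ^ k * (1 - q) ^ (n - k) - p ^ k * (1 - p) ^ (n - k)) =
      (p - q) * (n * (n - 1).choose m * t ^ m * (1 - t) ^ (n - 1 - m)) := by
  set P := ∑ ν ∈ range (m + 1), bernsteinPolynomial ℝ n ν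
  obtain ⟨t, ht, hslope⟩ :=
    exists_deriv_eq_slope (fun x ↦ P.eval x) hqp P.continuousOn P.differentiableOn
  rw [Polynomial.deriv, bernsteinPolynomial.derivative_sum_range, eq_div_iff (sub_ne_zero.2 hqp.ne')]
    at hslope
  refine ⟨t, ht, ?_⟩
  simp only [P, eval_finsetSum, bernsteinPolynomial.eval_eq, eval_neg, eval_mul, eval_natCast]
    at hslope
  simp only [mul_sub, sum_sub_distrib]
  linear_combination hslope

theorem sum_range_abs_eq_two_nsmul_of_sign_change {α : Type*} [AddCommGroup α] [LinearOrder α]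
    [IsOrderedAddMonoid α] {f : ℕ → α} {m n : ℕ} (hmn : m ≤ n)
    (hsum : ∑ k ∈ range n, f k = 0) (hneg : ∀ k < m, f k ≤ 0)
    (hpos : ∀ k, m ≤ k → k < n → 0 ≤ f k) :
    ∑ k ∈ range n, |f k| = 2 • ∑ k ∈ range m, -f k := by
  rw [← sum_range_add_sum_Ico _ hmn] at hsum ⊢
  have hlow : ∑ k ∈ range m, |f k| = ∑ k ∈ range m, -f k :=
    sum_congr rfl fun k hk ↦ abs_of_nonpos (hneg k (mem_range.1 hk))
  have hhigh : ∑ k ∈ Ico m n, |f k| = ∑ k ∈ Ico m n, f k :=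
    sum_congr rfl fun k hk ↦ abs_of_nonneg (hpos k (mem_Ico.1 hk).1 (mem_Ico.1 hk).2)
  rw [hlow, hhigh, eq_neg_of_add_eq_zero_right hsum, sum_neg_distrib, two_nsmul]

/-- The real `k` at which `p ^ k * (1 - p) ^ (s - k) = q ^ k * (1 - q) ^ (s - k)`. -/
noncomputable def binomialCrossing (s : ℕ) (p q : ℝ) : ℝ :=
  s * (log (1 - q) - log (1 - p)) / (log p + log (1 - q) - log q - log (1 - p))

section
variable {p q : ℝ}

theorem log_odds_sub_log_odds_pos (hq : 0 < q) (hqp : q < p) (hp : p < 1) :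
    0 < log p + log (1 - q) - log q - log (1 - p) := by
  have := log_lt_log hq hqp
  have := log_lt_log (sub_pos.2 hp) (by linarith : 1 - p < 1 - q)
  linarith

theorem mul_le_binomialCrossing (s : ℕ) (hq : 0 < q) (hqp : q < p) (hp : p < 1) :
    q * s ≤ binomialCrossing s p q := by
  have h₁ := sub_lt_mul_log_sub_log hq (hq.trans hqp) hqp.ne
  have h₂ := sub_lt_mul_log_sub_log (sub_pos.2 (hqp.trans hp)) (sub_pos.2 hp) (by linarith)
  rw [binomialCrossing, le_div_iff₀ (log_odds_sub_log_odds_pos hq hqp hp)]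
  have : 0 ≤ (s : ℝ) := s.cast_nonneg
  nlinarith

theorem binomialCrossing_lt_mul {s : ℕ} (hs : 0 < s) (hq : 0 < q) (hqp : q < p) (hp : p < 1) :
    binomialCrossing s p q < p * s := by
  have h₁ := sub_lt_mul_log_sub_log (hq.trans hqp) hq hqp.ne'
  have h₂ := sub_lt_mul_log_sub_log (sub_pos.2 hp) (sub_pos.2 (hqp.trans hp)) (by linarith)
  rw [binomialCrossing, div_lt_iff₀ (log_odds_sub_log_odds_pos hq hqp hp)]
  have : 0 < (s : ℝ) := Nat.cast_pos.2 hs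
  nlinarith

theorem pow_mul_one_sub_pow_le_iff_le_binomialCrossing (hq : 0 < q) (hqp : q < p) (hp : p < 1)
    {s k : ℕ} (hk : k ≤ s) :
    p ^ k * (1 - p) ^ (s - k) ≤ q ^ k * (1 - q) ^ (s - k) ↔ (k : ℝ) ≤ binomialCrossing s p q := by
  have hp₀ := hq.trans hqp
  have hp₁ := sub_pos.2 hp
  have hq₁ := sub_pos.2 (hqp.trans hp)
  rw [binomialCrossing, le_div_iff₀ (log_odds_sub_log_odds_pos hq hqp hp),
    ← log_le_log_iff (by positivity) (by positivity), log_mul (by positivity) (by positivity),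
    log_mul (by positivity) (by positivity), log_pow, log_pow, log_pow, log_pow, Nat.cast_sub hk]
  constructor <;> intro h <;> linarith

end

/-- For `0 < q < p < 1` and a positive integer `s`, with
`k₀ = ⌊ s·(ln(1-q) - ln(1-p)) / (ln p + ln(1-q) - ln q - ln(1-p)) ⌋`, one has
`⌊qs⌋ ≤ k₀ < ps`, and the sum `∑_k C(s,k)|p^k(1-p)^{s-k} - q^k(1-q)^{s-k}|`
equals `2(p-q)·s·C(s-1,k₀)·t^{k₀}(1-t)^{s-1-k₀}` for some `t ∈ (q, p)`. -/
theorem firstOrderComplexity.binomial_tv_mean_value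
    (s : ℕ) (hs : 0 < s) (p q : ℝ) (hq : 0 < q) (hqp : q < p) (hp : p < 1)
    (k₀ : ℕ)
    (hk₀ : k₀ = ⌊(s : ℝ) * (Real.log (1 - q) - Real.log (1 - p)) /
        (Real.log p + Real.log (1 - q) - Real.log q - Real.log (1 - p))⌋₊) :
    (⌊q * (s : ℝ)⌋₊ ≤ k₀ ∧ (k₀ : ℝ) < p * (s : ℝ)) ∧
    ∃ t ∈ Set.Ioo q p,
      ∑ k ∈ Finset.range (s + 1),
          (s.choose k : ℝ) * |p ^ k * (1 - p) ^ (s - k) - q ^ k * (1 - q) ^ (s - k)|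
        = 2 * (p - q) * (s : ℝ) * ((s - 1).choose k₀ : ℝ) * t ^ k₀ * (1 - t) ^ (s - 1 - k₀) := by
  replace hk₀ : k₀ = ⌊binomialCrossing s p q⌋₊ := hk₀
  have hcross₀ : 0 ≤ binomialCrossing s p q :=
    (by positivity : 0 ≤ q * s).trans (mul_le_binomialCrossing s hq hqp hp)
  have hk₀_lt : (k₀ : ℝ) < p * s :=
    (hk₀ ▸ Nat.floor_le hcross₀).trans_lt (binomialCrossing_lt_mul hs hq hqp hp)
  have hk₀_le : k₀ ≤ s := by
    have : p * s ≤ s := mul_le_of_le_one_left s.cast_nonneg hp.le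
    exact_mod_cast (hk₀_lt.trans_le this).le
  refine ⟨⟨hk₀ ▸ Nat.floor_le_floor (mul_le_binomialCrossing s hq hqp hp), hk₀_lt⟩, ?_⟩
  set f : ℕ → ℝ := fun k ↦ s.choose k * (p ^ k * (1 - p) ^ (s - k) - q ^ k * (1 - q) ^ (s - k))
  have hsum : ∑ k ∈ range (s + 1), f k = 0 := by
    simp only [f, mul_sub, sum_sub_distrib, sum_range_choose_mul_pow_mul_one_sub_pow, sub_self]
  have hneg : ∀ k < k₀ + 1, f k ≤ 0 := fun k hk ↦
    mul_nonpos_of_nonneg_of_nonpos (Nat.cast_nonneg _) <| sub_nonpos.2 <|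
      (pow_mul_one_sub_pow_le_iff_le_binomialCrossing hq hqp hp (by omega)).2 <|
        (Nat.cast_le.2 (Nat.le_of_lt_succ hk)).trans (hk₀ ▸ Nat.floor_le hcross₀)
  have hpos : ∀ k, k₀ + 1 ≤ k → k < s + 1 → 0 ≤ f k := fun k hk hks ↦
    mul_nonneg (Nat.cast_nonneg _) <| sub_nonneg.2 <| le_of_lt <| not_le.1 <|
      (pow_mul_one_sub_pow_le_iff_le_binomialCrossing hq hqp hp (by omega)).not.2 <| not_le.2 <|
        (hk₀ ▸ Nat.lt_floor_add_one _).trans_le (by exact_mod_cast hk)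
  obtain ⟨t, ht, hmvt⟩ := exists_mem_Ioo_sum_range_choose_mul_sub_eq s k₀ hqp
  refine ⟨t, ht, ?_⟩
  calc _ = ∑ k ∈ range (s + 1), |f k| := sum_congr rfl fun k _ ↦ by rw [abs_mul, Nat.abs_cast]
    _ = 2 • ∑ k ∈ range (k₀ + 1), -f k :=
      sum_range_abs_eq_two_nsmul_of_sign_change (by omega) hsum hneg hpos
    _ = _ := by simp only [f, ← mul_neg, neg_sub, two_nsmul, hmvt]; ring
end

section
/- Let G₁ and G₂ be graphs with no winning strategy for Spoiler in the k-round Ehrenfeucht–Fraïssé game on G₁ and G₂; then for every graph H, Duplicator has a winning strategy in the k-round Ehrenfeucht–Fraïssé game on the Cartesian products G₁ □ H and G₂ □ H. -/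
/-- A list of pairs of chosen vertices is a partial isomorphism between `G` and `H`. -/
def EFPartialIso {V W : Type*} (G : SimpleGraph V) (H : SimpleGraph W)
    (l : List (V × W)) : Prop :=
  ∀ p ∈ l, ∀ q ∈ l,
    ((p : V × W).1 = (q : V × W).1 ↔ p.2 = q.2) ∧ (G.Adj p.1 q.1 ↔ H.Adj p.2 q.2)

/-- Duplicator has a winning strategy in the `k`-round Ehrenfeucht–Fraïssé game
on `G` and `H` from the position `l` (equivalently, Spoiler has no winning
strategy): in each round Spoiler picks a vertex in either graph and Duplicator
responds in the other, and after `k` rounds the chosen tuples must form a partial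
isomorphism. -/
def EFDupWins {V W : Type*} (G : SimpleGraph V) (H : SimpleGraph W) :
    ℕ → List (V × W) → Prop
  | 0, l => EFPartialIso G H l
  | (k + 1), l =>
      (∀ a : V, ∃ b : W, EFDupWins G H k ((a, b) :: l)) ∧
      (∀ b : W, ∃ a : V, EFDupWins G H k ((a, b) :: l))


lemma EF_boxProd_aux {V₁ V₂ U : Type*} (G₁ : SimpleGraph V₁) (G₂ : SimpleGraph V₂)
    (H : SimpleGraph U) : ∀ (k : ℕ) (l : List ((V₁ × U) × (V₂ × U))),
    (∀ p ∈ l, (p : (V₁ × U) × (V₂ × U)).1.2 = p.2.2) →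
    EFDupWins G₁ G₂ k (l.map (fun p => (p.1.1, p.2.1))) →
    EFDupWins (G₁.boxProd H) (G₂.boxProd H) k l := by
  intro k
  induction k with
  | zero =>
    intro l hl h p hp q hq
    have h2 := h (p.1.1, p.2.1) (List.mem_map_of_mem (f := fun p => (p.1.1, p.2.1)) hp)
      (q.1.1, q.2.1) (List.mem_map_of_mem (f := fun p => (p.1.1, p.2.1)) hq)
    have hp2 := hl p hp
    have hq2 := hl q hq
    obtain ⟨he, ha⟩ := h2
    constructor
    · simp only [Prod.ext_iff, he, hp2, hq2]
    · simp only [SimpleGraph.boxProd_adj, he, ha, hp2, hq2]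
  | succ k ih =>
    intro l hl h
    constructor
    · rintro ⟨a, u⟩
      obtain ⟨b, hb⟩ := h.1 a
      refine ⟨(b, u), ih (((a, u), (b, u)) :: l) ?_ hb⟩
      intro p hp
      rcases List.mem_cons.mp hp with e | hp
      · subst e; rfl
      · exact hl p hp
    · rintro ⟨b, u⟩
      obtain ⟨a, ha⟩ := h.2 b
      refine ⟨(a, u), ih (((a, u), (b, u)) :: l) ?_ ha⟩
      intro p hp
      rcases List.mem_cons.mp hp with e | hp
      · subst e; rfl
      · exact hl p hp

/-- If Spoiler has no winning strategy (i.e. Duplicator wins) in the `k`-round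
EF game on `G₁` and `G₂`, then for every graph `H` Duplicator also wins the
`k`-round EF game on the Cartesian (box) products `G₁ □ H` and `G₂ □ H`. -/
theorem firstOrderComplexity.EF_boxProd
    {V₁ V₂ U : Type*} (G₁ : SimpleGraph V₁) (G₂ : SimpleGraph V₂)
    (H : SimpleGraph U) (k : ℕ) (h : EFDupWins G₁ G₂ k []) :
    EFDupWins (G₁.boxProd H) (G₂.boxProd H) k [] := by
  exact EF_boxProd_aux G₁ G₂ H k [] (by simp) h
end
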